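/- Let ρ : 𝒳 → ℝ be a star-shaped risk measure and let Γ_1 and Γ_2 be two sets of convex risk measures such that ρ(X) = min_{γ∈Γ_1} γ(X) = min_{γ∈Γ_2} γ(X) for all X ∈ 𝒳 (minima attained). Then the relaxations coincide: Γ̃_1 = Γ̃_2 = {γ : γ is a convex risk measure on 𝒳 and γ(X) ≥ ρ(X) for all X ∈ 𝒳}. In particular, the relaxation does not depend on the chosen representation of ρ. -/
import Mathlib


open BoundedContinuousFunction

def IsRiskMeasure {Ω : Type*} [TopologicalSpace Ω] (ρ : (Ω →ᵇ ℝ) → ℝ) : Prop :=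
  (∀ X Y : Ω →ᵇ ℝ, Y ≤ X → ρ Y ≤ ρ X) ∧
  (∀ (X : Ω →ᵇ ℝ) (m : ℝ), ρ (X - const Ω m) = ρ X - m) ∧
  ρ 0 = 0

def IsStarShaped {Ω : Type*} [TopologicalSpace Ω] (ρ : (Ω →ᵇ ℝ) → ℝ) : Prop :=
  ∀ (X : Ω →ᵇ ℝ) (l : ℝ), 1 < l → l * ρ X ≤ ρ (l • X)

def IsConvex {Ω : Type*} [TopologicalSpace Ω] (ρ : (Ω →ᵇ ℝ) → ℝ) : Prop :=
  ∀ (X Y : Ω →ᵇ ℝ) (t : ℝ), t ∈ Set.Icc (0 : ℝ) 1 →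
    ρ (t • X + (1 - t) • Y) ≤ t * ρ X + (1 - t) * ρ Y

/-- The relaxation `Γ̃` of a set `Γ` of convex risk measures. -/
def relaxation {Ω : Type*} [TopologicalSpace Ω] (Γ : Set ((Ω →ᵇ ℝ) → ℝ)) :
    Set ((Ω →ᵇ ℝ) → ℝ) :=
  {g | (IsRiskMeasure g ∧ IsConvex g) ∧ ∀ X : Ω →ᵇ ℝ, ∃ γ ∈ Γ, γ X ≤ g X}

theorem relaxation_independent_of_representation
    {Ω : Type*} [TopologicalSpace Ω] [DiscreteTopology Ω] [Nonempty Ω]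
    (ρ : (Ω →ᵇ ℝ) → ℝ) (hρ : IsRiskMeasure ρ) (hss : IsStarShaped ρ)
    (Γ₁ Γ₂ : Set ((Ω →ᵇ ℝ) → ℝ))
    (hΓ₁ : ∀ γ ∈ Γ₁, IsRiskMeasure γ ∧ IsConvex γ)
    (hΓ₂ : ∀ γ ∈ Γ₂, IsRiskMeasure γ ∧ IsConvex γ)
    (hrep₁ : ∀ X : Ω →ᵇ ℝ, IsLeast {y : ℝ | ∃ γ ∈ Γ₁, y = γ X} (ρ X))
    (hrep₂ : ∀ X : Ω →ᵇ ℝ, IsLeast {y : ℝ | ∃ γ ∈ Γ₂, y = γ X} (ρ X)) :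
    relaxation Γ₁ =
        {γ | (IsRiskMeasure γ ∧ IsConvex γ) ∧ ∀ X : Ω →ᵇ ℝ, ρ X ≤ γ X} ∧
    relaxation Γ₂ =
        {γ | (IsRiskMeasure γ ∧ IsConvex γ) ∧ ∀ X : Ω →ᵇ ℝ, ρ X ≤ γ X} := by
  have key : ∀ (Γ : Set ((Ω →ᵇ ℝ) → ℝ)),
      (∀ X : Ω →ᵇ ℝ, IsLeast {y : ℝ | ∃ γ ∈ Γ, y = γ X} (ρ X)) →
      relaxation Γ =
        {γ | (IsRiskMeasure γ ∧ IsConvex γ) ∧ ∀ X : Ω →ᵇ ℝ, ρ X ≤ γ X} := by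
    intro Γ hrep
    ext g
    constructor
    · rintro ⟨hg, hdom⟩
      refine ⟨hg, fun X => ?_⟩
      obtain ⟨γ, hγΓ, hγX⟩ := hdom X
      exact le_trans ((hrep X).2 ⟨γ, hγΓ, rfl⟩) hγX
    · rintro ⟨hg, hdom⟩
      refine ⟨hg, fun X => ?_⟩
      obtain ⟨γ, hγΓ, hγX⟩ := (hrep X).1
      exact ⟨γ, hγΓ, hγX ▸ hdom X⟩
  exact ⟨key Γ₁ hrep₁, key Γ₂ hrep₂⟩
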